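/- arXiv:q-alg/9706013 — 2 statements merged into one kernel-verified Lean document; each statement's English description precedes it below -/
import Mathlib

section
/- For 0 < |q| < 1, 0 < |p| < 1 with p = q^{2k} for an odd nonzero integer k, and any positive integer m, the exchange function F(m,x) = ∏_{s=1}^{2m} q^{-1}·ϑ_{q⁴}(x²q²p^{-s})·ϑ_{q⁴}(x^{-2}q²p^{s}) / (ϑ_{q⁴}(x^{-2}p^{s})·ϑ_{q⁴}(x²p^{-s})) equals 1 for all x in its domain. -/
open Complex Finset

/-- The q-Pochhammer infinite product `(x;a)_∞ = ∏_{n≥0} (1 - x aⁿ)`. -/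
noncomputable def qPoch (x a : ℂ) : ℂ := ∏' n : ℕ, (1 - x * a ^ n)

/-- The Jacobi theta function `ϑ_a(x) = (x;a)_∞ (a x⁻¹;a)_∞ (a;a)_∞`. -/
noncomputable def theta (a x : ℂ) : ℂ := qPoch x a * qPoch (a * x⁻¹) a * qPoch a a

/-- The exchange function `F(m,x)` of eq. (2.6a), for positive `m`. -/
noncomputable def Fexch (q p : ℂ) (m : ℕ) (x : ℂ) : ℂ :=
  ∏ s ∈ Finset.Icc 1 (2 * m),
    q⁻¹ * theta (q ^ 4) (x ^ 2 * q ^ 2 * p ^ (-(s : ℤ))) *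
      theta (q ^ 4) (x⁻¹ ^ 2 * q ^ 2 * p ^ (s : ℤ)) /
      (theta (q ^ 4) (x⁻¹ ^ 2 * p ^ (s : ℤ)) * theta (q ^ 4) (x ^ 2 * p ^ (-(s : ℤ))))

/-!
Write `a = q⁴`. The symmetries `ϑ_a(a y⁻¹) = ϑ_a(y)` and `ϑ_a(a y) = -y⁻¹ ϑ_a(y)` turn the
`s`-th factor of `F(m,x)` into `G(x⁻² pˢ)`, where `G(y) = -q⁻¹ y (ϑ_a(q² y) / ϑ_a(y))²`.
The function `G` is invariant under `y ↦ q⁴ y` and inverted by `y ↦ q² y`; since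
`p = (q⁴)ʲ q²` for `k = 2j + 1`, this gives `G(p y) = G(y)⁻¹`, so the factors cancel in the
consecutive pairs `s = 2i + 1, 2i + 2`.
-/

lemma apply_zpow_mul_of_apply_mul {G₀ α : Type*} [CommGroupWithZero G₀] {f : G₀ → α} {a : G₀}
    (ha : a ≠ 0) (hf : ∀ y ≠ 0, f (a * y) = f y) (n : ℤ) {y : G₀} (hy : y ≠ 0) :
    f (a ^ n * y) = f y := by
  induction n using Int.induction_on with
  | zero => simp
  | succ n ih =>
    rw [zpow_add_one₀ ha, mul_comm _ a, mul_assoc, hf _ (by simp [ha, hy]), ih]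
  | pred n ih =>
    rw [← ih, ← hf _ (mul_ne_zero (zpow_ne_zero _ ha) hy), ← mul_assoc, ← zpow_one_add₀ ha,
      add_sub_cancel]

section Theta

variable {a : ℂ}

lemma multipliable_one_sub_mul_pow (x : ℂ) (ha : ‖a‖ < 1) :
    Multipliable fun n : ℕ => 1 - x * a ^ n := by
  have hsum : Summable fun n : ℕ => ‖-(x * a ^ n)‖ := by
    simpa [norm_mul, norm_pow] using
      (summable_geometric_of_lt_one (norm_nonneg a) ha).mul_left ‖x‖
  simpa [sub_eq_add_neg] using multipliable_one_add_of_summable hsum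

lemma qPoch_eq_one_sub_mul (x : ℂ) (ha : ‖a‖ < 1) :
    qPoch x a = (1 - x) * qPoch (x * a) a := by
  have hshift : (fun n : ℕ => 1 - x * a ^ (n + 1)) = fun n => 1 - x * a * a ^ n := by
    funext n; ring
  rw [qPoch, tprod_eq_zero_mul' (by rw [hshift]; exact multipliable_one_sub_mul_pow _ ha),
    hshift]
  simp [qPoch]

lemma theta_mul_inv (ha : a ≠ 0) (y : ℂ) : theta a (a * y⁻¹) = theta a y := by
  rw [theta, theta, mul_inv, inv_inv, mul_inv_cancel_left₀ ha]
  ring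

lemma theta_mul (ha : ‖a‖ < 1) (ha0 : a ≠ 0) {y : ℂ} (hy : y ≠ 0) :
    theta a (a * y) = -y⁻¹ * theta a y := by
  have hinv : a * (a * y)⁻¹ = y⁻¹ := by field_simp
  rw [theta, theta, hinv, qPoch_eq_one_sub_mul y ha, qPoch_eq_one_sub_mul y⁻¹ ha,
    mul_comm y⁻¹ a, mul_comm y a]
  field_simp
  ring

lemma theta_zpow_mul_eq_zero_iff (ha : ‖a‖ < 1) (ha0 : a ≠ 0) (n : ℤ) {y : ℂ} (hy : y ≠ 0) :
    theta a (a ^ n * y) = 0 ↔ theta a y = 0 :=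
  (apply_zpow_mul_of_apply_mul (f := fun z => theta a z = 0) ha0
    (fun _ hz => propext (by simp [theta_mul ha ha0 hz, hz])) n hy).to_iff

end Theta

lemma prod_Icc_one_two_mul_eq_one {M : Type*} [CommMonoid M] (f : ℕ → M) (m : ℕ)
    (h : ∀ j < m, f (2 * j + 1) * f (2 * j + 2) = 1) : ∏ s ∈ Icc 1 (2 * m), f s = 1 := by
  induction m with
  | zero => simp
  | succ m ih =>
    rw [show 2 * (m + 1) = 2 * m + 1 + 1 by ring, prod_Icc_succ_top (by omega),
      prod_Icc_succ_top (by omega), ih fun j hj => h j (by omega), one_mul]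
    exact h m (by omega)

noncomputable def exchFactor (q y : ℂ) : ℂ :=
  -q⁻¹ * y * (theta (q ^ 4) (q ^ 2 * y) / theta (q ^ 4) y) ^ 2

lemma zpow_two_mul_two_mul_add_one {G₀ : Type*} [GroupWithZero G₀] {q : G₀} (hq : q ≠ 0)
    (j : ℤ) : q ^ (2 * (2 * j + 1)) = (q ^ 4) ^ j * q ^ 2 := by
  rw [show 2 * (2 * j + 1) = 4 * j + 2 by ring, zpow_add₀ hq, zpow_mul]
  norm_cast

section ExchFactor

variable {q : ℂ}

lemma norm_pow_four_lt_one (hq1 : ‖q‖ < 1) : ‖q ^ 4‖ < 1 := by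
  rw [norm_pow]
  exact pow_lt_one₀ (norm_nonneg q) hq1 (by norm_num)

lemma exchFactor_pow_four_mul (hq : q ≠ 0) (hq1 : ‖q‖ < 1) {y : ℂ} (hy : y ≠ 0) :
    exchFactor q (q ^ 4 * y) = exchFactor q y := by
  have ha := norm_pow_four_lt_one hq1
  have ha0 : q ^ 4 ≠ 0 := pow_ne_zero 4 hq
  rw [exchFactor, exchFactor, show q ^ 2 * (q ^ 4 * y) = q ^ 4 * (q ^ 2 * y) by ring,
    theta_mul ha ha0 (by positivity), theta_mul ha ha0 hy]
  field_simp

lemma exchFactor_pow_two_mul (hq : q ≠ 0) (hq1 : ‖q‖ < 1) {y : ℂ} (hy : y ≠ 0) :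
    exchFactor q (q ^ 2 * y) = (exchFactor q y)⁻¹ := by
  rw [exchFactor, exchFactor, show q ^ 2 * (q ^ 2 * y) = q ^ 4 * y by ring,
    theta_mul (norm_pow_four_lt_one hq1) (pow_ne_zero 4 hq) hy]
  field_simp

lemma exchFactor_pow_two_mul_odd (hq : q ≠ 0) (hq1 : ‖q‖ < 1) {k : ℤ} (hk : Odd k) {y : ℂ}
    (hy : y ≠ 0) : exchFactor q (q ^ (2 * k) * y) = (exchFactor q y)⁻¹ := by
  obtain ⟨j, rfl⟩ := hk
  rw [zpow_two_mul_two_mul_add_one hq, mul_assoc, apply_zpow_mul_of_apply_mul (pow_ne_zero 4 hq)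
      (fun _ => exchFactor_pow_four_mul hq hq1) j (by positivity),
    exchFactor_pow_two_mul hq hq1 hy]

lemma exchFactor_mul_exchFactor_pow_two_mul_odd (hq : q ≠ 0) (hq1 : ‖q‖ < 1) {k : ℤ}
    (hk : Odd k) {y : ℂ} (hy : y ≠ 0) (hθ : theta (q ^ 4) y ≠ 0)
    (hθ' : theta (q ^ 4) (q ^ (2 * k) * y) ≠ 0) :
    exchFactor q y * exchFactor q (q ^ (2 * k) * y) = 1 := by
  have hθ₂ : theta (q ^ 4) (q ^ 2 * y) ≠ 0 := by
    obtain ⟨j, rfl⟩ := hk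
    rwa [zpow_two_mul_two_mul_add_one hq, mul_assoc, Ne, theta_zpow_mul_eq_zero_iff
      (norm_pow_four_lt_one hq1) (pow_ne_zero 4 hq) j (by positivity)] at hθ'
  rw [exchFactor_pow_two_mul_odd hq hq1 hk hy, mul_inv_cancel₀]
  simp [exchFactor, hq, hy, hθ, hθ₂]

lemma theta_quotient_eq_exchFactor (hq : q ≠ 0) (hq1 : ‖q‖ < 1) {z : ℂ} (hz : z ≠ 0) :
    q⁻¹ * theta (q ^ 4) (z⁻¹ * q ^ 2) * theta (q ^ 4) (z * q ^ 2) /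
      (theta (q ^ 4) z * theta (q ^ 4) z⁻¹) = exchFactor q z := by
  have ha0 : q ^ 4 ≠ 0 := pow_ne_zero 4 hq
  have hθ₁ : theta (q ^ 4) (z⁻¹ * q ^ 2) = theta (q ^ 4) (z * q ^ 2) := by
    rw [← theta_mul_inv ha0 (z * q ^ 2)]
    congr 1
    field_simp
  have hθ₂ : theta (q ^ 4) z⁻¹ = -z⁻¹ * theta (q ^ 4) z := by
    rw [← theta_mul (norm_pow_four_lt_one hq1) ha0 hz, ← theta_mul_inv ha0 (q ^ 4 * z)]
    congr 1
    field_simp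
  rw [hθ₁, hθ₂, exchFactor, mul_comm z (q ^ 2)]
  field_simp

lemma Fexch_eq_prod_exchFactor (hq : q ≠ 0) (hq1 : ‖q‖ < 1) {p : ℂ} (hp : p ≠ 0) (m : ℕ)
    {x : ℂ} (hx : x ≠ 0) :
    Fexch q p m x = ∏ s ∈ Icc 1 (2 * m), exchFactor q (x⁻¹ ^ 2 * p ^ s) := by
  refine prod_congr rfl fun s _ => ?_
  have hz : x⁻¹ ^ 2 * p ^ s ≠ 0 := by positivity
  rw [← theta_quotient_eq_exchFactor hq hq1 hz]
  simp only [zpow_neg, zpow_natCast, mul_inv, inv_pow, inv_inv]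
  ring_nf

end ExchFactor

theorem F_eq_one_of_k_odd_general (q p : ℂ) (hq0 : 0 < ‖q‖) (hq1 : ‖q‖ < 1)
    (k : ℤ) (hkodd : Odd k) (hpq : p = q ^ (2 * k))
    (m : ℕ) (x : ℂ) (hx : x ≠ 0)
    (hden : ∀ s ∈ Finset.Icc 1 (2 * m),
      theta (q ^ 4) (x⁻¹ ^ 2 * p ^ (s : ℤ)) ≠ 0 ∧
      theta (q ^ 4) (x ^ 2 * p ^ (-(s : ℤ))) ≠ 0) :
    Fexch q p m x = 1 := by
  have hq : q ≠ 0 := norm_pos_iff.mp hq0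
  have hp : p ≠ 0 := hpq ▸ zpow_ne_zero _ hq
  rw [Fexch_eq_prod_exchFactor hq hq1 hp m hx]
  refine prod_Icc_one_two_mul_eq_one _ m fun j hj => ?_
  have hθ := (hden (2 * j + 1) (by simp; omega)).1
  have hθ' := (hden (2 * j + 2) (by simp; omega)).1
  simp only [zpow_natCast] at hθ hθ'
  rw [show x⁻¹ ^ 2 * p ^ (2 * j + 2) = q ^ (2 * k) * (x⁻¹ ^ 2 * p ^ (2 * j + 1)) by
    rw [← hpq]; ring] at hθ' ⊢
  exact exchFactor_mul_exchFactor_pow_two_mul_odd hq hq1 hkodd (by positivity) hθ hθ'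

theorem F_eq_one_of_k_odd (q p : ℂ) (hq0 : 0 < ‖q‖) (hq1 : ‖q‖ < 1)
    (hp0 : 0 < ‖p‖) (hp1 : ‖p‖ < 1)
    (k : ℤ) (hk : k ≠ 0) (hkodd : Odd k) (hpq : p = q ^ (2 * k))
    (m : ℕ) (hm : 0 < m) (x : ℂ) (hx : x ≠ 0)
    (hden : ∀ s ∈ Finset.Icc 1 (2 * m),
      theta (q ^ 4) (x⁻¹ ^ 2 * p ^ (s : ℤ)) ≠ 0 ∧
      theta (q ^ 4) (x ^ 2 * p ^ (-(s : ℤ))) ≠ 0) :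
    Fexch q p m x = 1 :=
  F_eq_one_of_k_odd_general q p hq0 hq1 k hkodd hpq m x hx hden
end

section
/- For 0 < |q| < 1, 0 < |p| < 1, positive integer m, and x ≠ 0 with all relevant theta values nonzero, the ratio F(m, q^c x)/F(m, -p^{1/2} x), where q^c := p^m q^{-2} (so that q^{c+2} = p^m), equals 𝒴(x) = [∏_{s=1}^{2m-1} x²·ϑ_{q⁴}(x^{-2}p^s)ϑ_{q⁴}(x²q²p^s)/(ϑ_{q⁴}(x²p^s)ϑ_{q⁴}(x^{-2}q²p^s))]². -/
open Complex Finset Filter Topology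

lemma hasProd_zero_of_eq_zero {f : ℕ → ℂ} {k : ℕ} (h : f k = 0) : HasProd f 0 := by
  have he : (fun s : Finset ℕ => ∏ i ∈ s, f i) =ᶠ[atTop] (fun _ => 0) := by
    filter_upwards [Filter.eventually_ge_atTop ({k} : Finset ℕ)] with s hs
    exact Finset.prod_eq_zero (hs (Finset.mem_singleton_self k)) h
  exact (tendsto_congr' he).2 tendsto_const_nhds

lemma multipliable_one_sub (c a : ℂ) (ha : ‖a‖ < 1) :
    Multipliable (fun n : ℕ => 1 - c * a ^ n) := by
  by_cases h : ∀ n : ℕ, 1 - c * a ^ n ≠ 0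
  · refine Complex.multipliable_of_summable_log ?_
    have hg : Summable (fun n : ℕ => 3/2 * (‖c‖ * ‖a‖ ^ n)) :=
      (((summable_geometric_of_lt_one (norm_nonneg a) ha).mul_left ‖c‖).mul_left (3/2))
    refine Summable.of_norm_bounded_eventually_nat hg ?_
    have ht : Tendsto (fun n : ℕ => ‖c‖ * ‖a‖ ^ n) atTop (𝓝 (‖c‖ * 0)) :=
      (tendsto_pow_atTop_nhds_zero_of_lt_one (norm_nonneg a) ha).const_mul ‖c‖
    rw [mul_zero] at ht
    filter_upwards [ht.eventually (eventually_le_nhds (by norm_num : (0:ℝ) < 1/2))] with n hn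
    have h1 : ‖-(c * a ^ n)‖ ≤ 1/2 := by
      rwa [norm_neg, norm_mul, norm_pow]
    have := Complex.norm_log_one_add_half_le_self h1
    rw [show (1 : ℂ) + -(c * a ^ n) = 1 - c * a ^ n by ring] at this
    calc ‖Complex.log (1 - c * a ^ n)‖ ≤ 3/2 * ‖-(c * a ^ n)‖ := this
      _ = 3/2 * (‖c‖ * ‖a‖ ^ n) := by rw [norm_neg, norm_mul, norm_pow]
  · push_neg at h
    obtain ⟨k, hk⟩ := h
    exact ⟨0, hasProd_zero_of_eq_zero hk⟩

lemma qPoch_shift (x a : ℂ) (ha : ‖a‖ < 1) : qPoch x a = (1 - x) * qPoch (a * x) a := by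
  have hm : Multipliable (fun n : ℕ => 1 - x * a ^ (n + 1)) := by
    have := multipliable_one_sub (a * x) a ha
    refine this.congr fun n => ?_
    rw [pow_succ]; ring
  have h0 : (∏' n : ℕ, (1 - x * a ^ n)) = (1 - x * a ^ 0) * ∏' n : ℕ, (1 - x * a ^ (n + 1)) :=
    tprod_eq_zero_mul' hm
  have h1 : (∏' n : ℕ, (1 - x * a ^ (n + 1))) = qPoch (a * x) a := by
    rw [qPoch]
    exact tprod_congr fun n => by rw [pow_succ]; ring
  rw [qPoch, h0, h1, pow_zero, mul_one]

lemma theta_inv (a x : ℂ) (ha : ‖a‖ < 1) (hx : x ≠ 0) :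
    theta a x⁻¹ = -x⁻¹ * theta a x := by
  unfold theta
  rw [inv_inv, qPoch_shift x⁻¹ a ha, qPoch_shift x a ha]
  have h2 : (1 - x⁻¹) = -x⁻¹ * (1 - x) := by field_simp; ring
  rw [h2]; ring

lemma theta_qmul (a x : ℂ) (ha : ‖a‖ < 1) (ha0 : a ≠ 0) (hx : x ≠ 0) :
    theta a (a * x) = -x⁻¹ * theta a x := by
  unfold theta
  have h1 : a * (a * x)⁻¹ = x⁻¹ := by field_simp
  rw [h1, qPoch_shift x⁻¹ a ha, qPoch_shift x a ha]
  have h2 : (1 - x⁻¹) = -x⁻¹ * (1 - x) := by field_simp; ring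
  rw [h2]; ring

section ELems
variable (q u : ℂ)

lemma thA (ha : ‖q^4‖ < 1) (hu : u ≠ 0) :
    theta (q^4) u⁻¹ = -u⁻¹ * theta (q^4) u := theta_inv _ _ ha hu

lemma thB (hq : q ≠ 0) (ha : ‖q^4‖ < 1) (hu : u ≠ 0) :
    theta (q^4) (q^4 * u) = -u⁻¹ * theta (q^4) u :=
  theta_qmul _ _ ha (pow_ne_zero 4 hq) hu

lemma thC (hq : q ≠ 0) (ha : ‖q^4‖ < 1) (hu : u ≠ 0) :
    theta (q^4) (q⁻¹^2 * u) = -(q⁻¹^2 * u) * theta (q^4) (q^2 * u) := by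
  have hv : q⁻¹^2 * u ≠ 0 := mul_ne_zero (pow_ne_zero 2 (inv_ne_zero hq)) hu
  have h := thB q (q⁻¹^2 * u) hq ha hv
  rw [show q^4 * (q⁻¹^2 * u) = q^2 * u by field_simp] at h
  rw [h]
  field_simp

lemma thE (hq : q ≠ 0) (ha : ‖q^4‖ < 1) (hu : u ≠ 0) :
    theta (q^4) (q^4 * u⁻¹) = theta (q^4) u := by
  rw [thB q u⁻¹ hq ha (inv_ne_zero hu), thA q u ha hu, inv_inv]
  field_simp

lemma thF (hq : q ≠ 0) (ha : ‖q^4‖ < 1) (hu : u ≠ 0) :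
    theta (q^4) (q⁻¹^4 * u) = -(q⁻¹^4 * u) * theta (q^4) u := by
  have hv : q⁻¹^4 * u ≠ 0 := mul_ne_zero (pow_ne_zero 4 (inv_ne_zero hq)) hu
  have h := thB q (q⁻¹^4 * u) hq ha hv
  rw [show q^4 * (q⁻¹^4 * u) = u by field_simp] at h
  rw [h]
  field_simp

lemma thG (hq : q ≠ 0) (ha : ‖q^4‖ < 1) (hu : u ≠ 0) :
    theta (q^4) (q^2 * u⁻¹) = theta (q^4) (q^2 * u) := by
  have hv : q⁻¹^2 * u ≠ 0 := mul_ne_zero (pow_ne_zero 2 (inv_ne_zero hq)) hu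
  rw [show q^2 * u⁻¹ = (q⁻¹^2 * u)⁻¹ by field_simp, thA q _ ha hv, thC q u hq ha hu]
  field_simp

lemma thD (hq : q ≠ 0) (ha : ‖q^4‖ < 1) (hu : u ≠ 0) :
    theta (q^4) (q^6 * u⁻¹) = -(q⁻¹^2 * u) * theta (q^4) (q^2 * u) := by
  have hv : q⁻¹^2 * u ≠ 0 := mul_ne_zero (pow_ne_zero 2 (inv_ne_zero hq)) hu
  rw [show q^6 * u⁻¹ = q^4 * (q⁻¹^2 * u)⁻¹ by field_simp,
    thE q (q⁻¹^2 * u) hq ha hv, thC q u hq ha hu]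

end ELems

section Hs
variable (q p x : ℂ) (t : ℤ)

lemma H1 (hq : q ≠ 0) (hp : p ≠ 0) (hx : x ≠ 0) (ha : ‖q^4‖ < 1) :
    theta (q^4) (x^2 * q⁻¹^2 * p^t) = -(q⁻¹^2*x^2*p^t) * theta (q^4) (x^2*q^2*p^t) := by
  have hu : x^2*p^t ≠ 0 := mul_ne_zero (pow_ne_zero 2 hx) (zpow_ne_zero t hp)
  rw [show x^2*q⁻¹^2*p^t = q⁻¹^2*(x^2*p^t) from by ring, thC q (x^2*p^t) hq ha hu,
    show q^2*(x^2*p^t) = x^2*q^2*p^t from by ring]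
  ring

lemma H2 (hq : q ≠ 0) (hp : p ≠ 0) (hx : x ≠ 0) (ha : ‖q^4‖ < 1) :
    theta (q^4) (x⁻¹^2 * q^6 * p^(-t)) = -(q⁻¹^2*x^2*p^t) * theta (q^4) (x^2*q^2*p^t) := by
  have hu : x^2*p^t ≠ 0 := mul_ne_zero (pow_ne_zero 2 hx) (zpow_ne_zero t hp)
  rw [show x⁻¹^2*q^6*p^(-t) = q^6*(x^2*p^t)⁻¹ from by
      rw [zpow_neg]; field_simp,
    thD q (x^2*p^t) hq ha hu,
    show q^2*(x^2*p^t) = x^2*q^2*p^t from by ring]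
  ring

lemma H3 (hq : q ≠ 0) (hp : p ≠ 0) (hx : x ≠ 0) (ha : ‖q^4‖ < 1) :
    theta (q^4) (x⁻¹^2 * q^4 * p^(-t)) = theta (q^4) (x^2*p^t) := by
  have hu : x^2*p^t ≠ 0 := mul_ne_zero (pow_ne_zero 2 hx) (zpow_ne_zero t hp)
  rw [show x⁻¹^2*q^4*p^(-t) = q^4*(x^2*p^t)⁻¹ from by
      rw [zpow_neg]; field_simp,
    thE q (x^2*p^t) hq ha hu]

lemma H4 (hq : q ≠ 0) (hp : p ≠ 0) (hx : x ≠ 0) (ha : ‖q^4‖ < 1) :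
    theta (q^4) (x^2 * q⁻¹^4 * p^t) = -(q⁻¹^4*x^2*p^t) * theta (q^4) (x^2*p^t) := by
  have hu : x^2*p^t ≠ 0 := mul_ne_zero (pow_ne_zero 2 hx) (zpow_ne_zero t hp)
  rw [show x^2*q⁻¹^4*p^t = q⁻¹^4*(x^2*p^t) from by ring, thF q (x^2*p^t) hq ha hu]
  ring

lemma H5 (hq : q ≠ 0) (hp : p ≠ 0) (hx : x ≠ 0) (ha : ‖q^4‖ < 1) :
    theta (q^4) (x⁻¹^2 * q^2 * p^(-t)) = theta (q^4) (x^2*q^2*p^t) := by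
  have hu : x^2*p^t ≠ 0 := mul_ne_zero (pow_ne_zero 2 hx) (zpow_ne_zero t hp)
  rw [show x⁻¹^2*q^2*p^(-t) = q^2*(x^2*p^t)⁻¹ from by
      rw [zpow_neg]; field_simp,
    thG q (x^2*p^t) hq ha hu,
    show q^2*(x^2*p^t) = x^2*q^2*p^t from by ring]

lemma H6 (hq : q ≠ 0) (hp : p ≠ 0) (hx : x ≠ 0) (ha : ‖q^4‖ < 1) :
    theta (q^4) (x⁻¹^2 * p^(-t)) = -(x⁻¹^2*p^(-t)) * theta (q^4) (x^2*p^t) := by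
  have hu : x^2*p^t ≠ 0 := mul_ne_zero (pow_ne_zero 2 hx) (zpow_ne_zero t hp)
  rw [show x⁻¹^2*p^(-t) = (x^2*p^t)⁻¹ from by rw [zpow_neg]; field_simp,
    thA q (x^2*p^t) ha hu,
    show (x^2*p^t)⁻¹ = x⁻¹^2*p^(-t) from by rw [zpow_neg]; field_simp]

end Hs

noncomputable def gfun (q p x : ℂ) (t : ℤ) : ℂ :=
  -(q⁻¹ * x^2 * p^t) * (theta (q^4) (x^2*q^2*p^t))^2 / (theta (q^4) (x^2*p^t))^2

lemma F1term (q p x : ℂ) (m s : ℕ) (hq : q ≠ 0) (hp : p ≠ 0) (hx : x ≠ 0)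
    (ha : ‖q^4‖ < 1)
    (hd : theta (q^4) ((p^m*q⁻¹^2*x)⁻¹^2 * p^(s:ℤ)) ≠ 0) :
    q⁻¹ * theta (q^4) ((p^m*q⁻¹^2*x)^2 * q^2 * p^(-(s:ℤ))) *
      theta (q^4) ((p^m*q⁻¹^2*x)⁻¹^2 * q^2 * p^(s:ℤ)) /
      (theta (q^4) ((p^m*q⁻¹^2*x)⁻¹^2 * p^(s:ℤ)) *
        theta (q^4) ((p^m*q⁻¹^2*x)^2 * p^(-(s:ℤ)))) =
      gfun q p x (2*(m:ℤ) - s) := by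
  have hpt : ∀ w : ℤ, p ^ w ≠ 0 := fun w => zpow_ne_zero w hp
  have a1 : (p^m*q⁻¹^2*x)^2 * q^2 * p^(-(s:ℤ)) = x^2*q⁻¹^2*p^(2*(m:ℤ) - s) := by
    rw [show (2*(m:ℤ) - s) = (m:ℤ) + m + (-(s:ℤ)) from by ring, zpow_add₀ hp, zpow_add₀ hp,
      zpow_natCast]
    field_simp
  have a2 : (p^m*q⁻¹^2*x)⁻¹^2 * q^2 * p^(s:ℤ) = x⁻¹^2*q^6*p^(-(2*(m:ℤ) - s)) := by
    rw [show (-(2*(m:ℤ) - s)) = (-(m:ℤ)) + (-(m:ℤ)) + (s:ℤ) from by ring, zpow_add₀ hp,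
      zpow_add₀ hp, zpow_neg, zpow_natCast]
    field_simp
    simp only [zpow_natCast]
  have a3 : (p^m*q⁻¹^2*x)⁻¹^2 * p^(s:ℤ) = x⁻¹^2*q^4*p^(-(2*(m:ℤ) - s)) := by
    rw [show (-(2*(m:ℤ) - s)) = (-(m:ℤ)) + (-(m:ℤ)) + (s:ℤ) from by ring, zpow_add₀ hp,
      zpow_add₀ hp, zpow_neg, zpow_natCast]
    field_simp
    simp only [zpow_natCast]
  have a4 : (p^m*q⁻¹^2*x)^2 * p^(-(s:ℤ)) = x^2*q⁻¹^4*p^(2*(m:ℤ) - s) := by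
    rw [show (2*(m:ℤ) - s) = (m:ℤ) + m + (-(s:ℤ)) from by ring, zpow_add₀ hp, zpow_add₀ hp,
      zpow_natCast]
    field_simp
  rw [a3, H3 q p x _ hq hp hx ha] at hd
  have hc : -(q⁻¹^4*x^2*p^(2*(m:ℤ) - s)) ≠ 0 := by
    refine neg_ne_zero.mpr (mul_ne_zero (mul_ne_zero ?_ (pow_ne_zero 2 hx)) (hpt _))
    exact pow_ne_zero 4 (inv_ne_zero hq)
  rw [a1, a2, a3, a4, H1 q p x _ hq hp hx ha, H2 q p x _ hq hp hx ha,
    H3 q p x _ hq hp hx ha, H4 q p x _ hq hp hx ha, gfun,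
    div_eq_div_iff (mul_ne_zero hd (mul_ne_zero hc hd)) (pow_ne_zero 2 hd)]
  ring

lemma F2term (q p r x : ℂ) (s : ℕ) (hq : q ≠ 0) (hp : p ≠ 0) (hx : x ≠ 0)
    (hr : r ^ 2 = p) (ha : ‖q^4‖ < 1)
    (hd : theta (q^4) ((-(r*x))^2 * p^(-(s:ℤ))) ≠ 0) :
    q⁻¹ * theta (q^4) ((-(r*x))^2 * q^2 * p^(-(s:ℤ))) *
      theta (q^4) ((-(r*x))⁻¹^2 * q^2 * p^(s:ℤ)) /
      (theta (q^4) ((-(r*x))⁻¹^2 * p^(s:ℤ)) *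
        theta (q^4) ((-(r*x))^2 * p^(-(s:ℤ)))) =
      gfun q p x (1 - (s:ℤ)) := by
  have hpt : ∀ w : ℤ, p ^ w ≠ 0 := fun w => zpow_ne_zero w hp
  have hsq : (-(r*x))^2 = p * x^2 := by linear_combination x^2 * hr
  have hsqi : (-(r*x))⁻¹^2 = (p * x^2)⁻¹ := by rw [inv_pow, hsq]
  have b1 : (-(r*x))^2 * q^2 * p^(-(s:ℤ)) = x^2*q^2*p^(1 - (s:ℤ)) := by
    rw [hsq, show ((1:ℤ) - s) = 1 + (-(s:ℤ)) from by ring, zpow_add₀ hp, zpow_one]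
    ring
  have b2 : (-(r*x))⁻¹^2 * q^2 * p^(s:ℤ) = x⁻¹^2*q^2*p^(-(1 - (s:ℤ))) := by
    rw [hsqi, show (-((1:ℤ) - s)) = (s:ℤ) + (-1:ℤ) from by ring, zpow_add₀ hp, zpow_neg,
      zpow_one]
    field_simp
  have b3 : (-(r*x))⁻¹^2 * p^(s:ℤ) = x⁻¹^2*p^(-(1 - (s:ℤ))) := by
    rw [hsqi, show (-((1:ℤ) - s)) = (s:ℤ) + (-1:ℤ) from by ring, zpow_add₀ hp, zpow_neg,
      zpow_one]
    field_simp
  have b4 : (-(r*x))^2 * p^(-(s:ℤ)) = x^2*p^(1 - (s:ℤ)) := by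
    rw [hsq, show ((1:ℤ) - s) = 1 + (-(s:ℤ)) from by ring, zpow_add₀ hp, zpow_one]
    ring
  rw [b4] at hd
  have hc : -(x⁻¹^2*p^(-(1 - (s:ℤ)))) ≠ 0 :=
    neg_ne_zero.mpr (mul_ne_zero (pow_ne_zero 2 (inv_ne_zero hx)) (hpt _))
  rw [b1, b2, b3, b4, H5 q p x _ hq hp hx ha, H6 q p x _ hq hp hx ha, gfun,
    div_eq_div_iff (mul_ne_zero (mul_ne_zero hc hd) hd) (pow_ne_zero 2 hd)]
  simp only [zpow_neg]
  field_simp [hpt ((1:ℤ)-s)]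

lemma Yterm (q p x : ℂ) (s : ℕ) (hq : q ≠ 0) (hp : p ≠ 0) (hx : x ≠ 0) (ha : ‖q^4‖ < 1)
    (hD : theta (q^4) (x^2*p^(s:ℤ)) ≠ 0)
    (hDm : theta (q^4) (x^2*p^(-(s:ℤ))) ≠ 0)
    (hNm : theta (q^4) (x^2*q^2*p^(-(s:ℤ))) ≠ 0) :
    (x^2 * theta (q^4) (x⁻¹^2 * p^(s:ℤ)) * theta (q^4) (x^2*q^2*p^(s:ℤ)) /
      (theta (q^4) (x^2*p^(s:ℤ)) * theta (q^4) (x⁻¹^2*q^2*p^(s:ℤ))))^2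
      = gfun q p x (s:ℤ) / gfun q p x (-(s:ℤ)) := by
  have hpt : ∀ w : ℤ, p ^ w ≠ 0 := fun w => zpow_ne_zero w hp
  have e6 := H6 q p x (-(s:ℤ)) hq hp hx ha
  rw [neg_neg] at e6
  have e5 := H5 q p x (-(s:ℤ)) hq hp hx ha
  rw [neg_neg] at e5
  have hc2 : -(q⁻¹*x^2*p^(-(s:ℤ))) ≠ 0 :=
    neg_ne_zero.mpr (mul_ne_zero (mul_ne_zero (inv_ne_zero hq) (pow_ne_zero 2 hx)) (hpt _))
  have hgne : gfun q p x (-(s:ℤ)) ≠ 0 := by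
    rw [gfun]
    exact div_ne_zero (mul_ne_zero hc2 (pow_ne_zero 2 hNm)) (pow_ne_zero 2 hDm)
  have hxx : x^2*x⁻¹^2 = 1 := by field_simp
  have hpp : p^(s:ℤ)*p^(-(s:ℤ)) = 1 := by rw [← zpow_add₀ hp]; simp
  rw [e5, e6, eq_div_iff hgne, gfun, gfun, div_pow, div_mul_div_comm,
    div_eq_div_iff (mul_ne_zero (pow_ne_zero 2 (mul_ne_zero hD hNm)) (pow_ne_zero 2 hDm))
      (pow_ne_zero 2 hD)]
  set N := theta (q^4) (x^2*q^2*p^(s:ℤ))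
  set D := theta (q^4) (x^2*p^(s:ℤ))
  set Dm := theta (q^4) (x^2*p^(-(s:ℤ)))
  set Nm := theta (q^4) (x^2*q^2*p^(-(s:ℤ)))
  linear_combination (-(q⁻¹*x^2*p^(s:ℤ))*(N*D*Nm*Dm)^2 *
      (x^2*x⁻¹^2*(p^(s:ℤ)*p^(-(s:ℤ))) + p^(s:ℤ)*p^(-(s:ℤ)))) * hxx +
    (-(q⁻¹*x^2*p^(s:ℤ))*(N*D*Nm*Dm)^2) * hpp

lemma Dne1 (q p x : ℂ) (m s : ℕ) (hq : q ≠ 0) (hp : p ≠ 0) (hx : x ≠ 0) (ha : ‖q^4‖ < 1)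
    (hd : theta (q^4) ((p^m*q⁻¹^2*x)⁻¹^2 * p^(s:ℤ)) ≠ 0) :
    theta (q^4) (x^2 * p^(2*(m:ℤ) - s)) ≠ 0 := by
  have a3 : (p^m*q⁻¹^2*x)⁻¹^2 * p^(s:ℤ) = x⁻¹^2*q^4*p^(-(2*(m:ℤ) - s)) := by
    rw [show (-(2*(m:ℤ) - s)) = (-(m:ℤ)) + (-(m:ℤ)) + (s:ℤ) from by ring, zpow_add₀ hp,
      zpow_add₀ hp, zpow_neg, zpow_natCast]
    field_simp
    simp only [zpow_natCast]
  rwa [a3, H3 q p x _ hq hp hx ha] at hd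

lemma Dne2 (q p r x : ℂ) (s : ℕ) (hp : p ≠ 0) (hr : r ^ 2 = p)
    (hd : theta (q^4) ((-(r*x))^2 * p^(-(s:ℤ))) ≠ 0) :
    theta (q^4) (x^2 * p^(1 - (s:ℤ))) ≠ 0 := by
  have hsq : (-(r*x))^2 = p * x^2 := by linear_combination x^2 * hr
  have b4 : (-(r*x))^2 * p^(-(s:ℤ)) = x^2*p^(1 - (s:ℤ)) := by
    rw [hsq, show ((1:ℤ) - s) = 1 + (-(s:ℤ)) from by ring, zpow_add₀ hp, zpow_one]
    ring
  rwa [b4] at hd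

lemma Nne2 (q p r x : ℂ) (s : ℕ) (hp : p ≠ 0) (hr : r ^ 2 = p)
    (hd : theta (q^4) ((-(r*x))^2 * q^2 * p^(-(s:ℤ))) ≠ 0) :
    theta (q^4) (x^2 * q^2 * p^(1 - (s:ℤ))) ≠ 0 := by
  have hsq : (-(r*x))^2 = p * x^2 := by linear_combination x^2 * hr
  have b1 : (-(r*x))^2 * q^2 * p^(-(s:ℤ)) = x^2*q^2*p^(1 - (s:ℤ)) := by
    rw [hsq, show ((1:ℤ) - s) = 1 + (-(s:ℤ)) from by ring, zpow_add₀ hp, zpow_one]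
    ring
  rwa [b1] at hd

/-- The exchange function `𝒴(x)` of eq. (2.10), for positive `m`. -/
noncomputable def Yexch (q p : ℂ) (m : ℕ) (x : ℂ) : ℂ :=
  (∏ s ∈ Finset.Icc 1 (2 * m - 1),
    x ^ 2 * theta (q ^ 4) (x⁻¹ ^ 2 * p ^ (s : ℤ)) * theta (q ^ 4) (x ^ 2 * q ^ 2 * p ^ (s : ℤ)) /
      (theta (q ^ 4) (x ^ 2 * p ^ (s : ℤ)) * theta (q ^ 4) (x⁻¹ ^ 2 * q ^ 2 * p ^ (s : ℤ)))) ^ 2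

/-- The structure-function computation of Theorem 5: with `q^c := pᵐ q⁻²`
(so that `q^{c+2} = pᵐ`) and `p^{1/2} := r` a fixed square root of `p`,
`F(m, q^c x) / F(m, -p^{1/2} x) = 𝒴(x)`. -/
theorem F_ratio_eq_Y (q p r : ℂ) (hq0 : 0 < ‖q‖) (hq1 : ‖q‖ < 1)
    (hp0 : 0 < ‖p‖) (hp1 : ‖p‖ < 1)
    (hr : r ^ 2 = p)
    (m : ℕ) (hm : 0 < m) (x : ℂ) (hx : x ≠ 0)
    (hden1 : ∀ s ∈ Finset.Icc 1 (2 * m),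
      theta (q ^ 4) ((p ^ m * q⁻¹ ^ 2 * x)⁻¹ ^ 2 * p ^ (s : ℤ)) ≠ 0 ∧
      theta (q ^ 4) ((p ^ m * q⁻¹ ^ 2 * x) ^ 2 * p ^ (-(s : ℤ))) ≠ 0)
    (hden2 : ∀ s ∈ Finset.Icc 1 (2 * m),
      theta (q ^ 4) ((-(r * x))⁻¹ ^ 2 * p ^ (s : ℤ)) ≠ 0 ∧
      theta (q ^ 4) ((-(r * x)) ^ 2 * p ^ (-(s : ℤ))) ≠ 0 ∧
      theta (q ^ 4) ((-(r * x)) ^ 2 * q ^ 2 * p ^ (-(s : ℤ))) ≠ 0 ∧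
      theta (q ^ 4) ((-(r * x))⁻¹ ^ 2 * q ^ 2 * p ^ (s : ℤ)) ≠ 0) :
    Fexch q p m (p ^ m * q⁻¹ ^ 2 * x) / Fexch q p m (-(r * x)) = Yexch q p m x := by
  have hq : q ≠ 0 := by intro h; rw [h] at hq0; simp at hq0
  have hp : p ≠ 0 := by intro h; rw [h] at hp0; simp at hp0
  have hqn : ‖q‖ < 1 := by exact hq1
  have ha : ‖q^4‖ < 1 := by
    rw [norm_pow]
    exact pow_lt_one₀ (norm_nonneg q) hqn (by norm_num)
  have hpt : ∀ w : ℤ, p^w ≠ 0 := fun w => zpow_ne_zero w hp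
  have hDg : ∀ t : ℤ, 0 ≤ t → t ≤ 2*(m:ℤ) - 1 → theta (q^4) (x^2 * p^t) ≠ 0 := by
    intro t h1 h2
    obtain ⟨s, hs1, hs2, hst⟩ : ∃ s : ℕ, 1 ≤ s ∧ s ≤ 2*m ∧ (2*(m:ℤ) - s) = t :=
      ⟨(2*(m:ℤ) - t).toNat, by omega, by omega, by omega⟩
    rw [← hst]
    exact Dne1 q p x m s hq hp hx ha (hden1 s (Finset.mem_Icc.mpr ⟨hs1, hs2⟩)).1
  have hDNneg : ∀ t : ℤ, 1 - 2*(m:ℤ) ≤ t → t ≤ 0 →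
      theta (q^4) (x^2 * p^t) ≠ 0 ∧ theta (q^4) (x^2*q^2*p^t) ≠ 0 := by
    intro t h1 h2
    obtain ⟨s, hs1, hs2, hst⟩ : ∃ s : ℕ, 1 ≤ s ∧ s ≤ 2*m ∧ (1 - (s:ℤ)) = t :=
      ⟨(1 - t).toNat, by omega, by omega, by omega⟩
    have h := hden2 s (Finset.mem_Icc.mpr ⟨hs1, hs2⟩)
    rw [← hst]
    exact ⟨Dne2 q p r x s hp hr h.2.1, Nne2 q p r x s hp hr h.2.2.1⟩
  have hF1 : Fexch q p m (p^m*q⁻¹^2*x) = ∏ s ∈ Finset.Icc 1 (2*m), gfun q p x (2*(m:ℤ) - s) := by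
    unfold Fexch
    exact Finset.prod_congr rfl fun s hs => F1term q p x m s hq hp hx ha (hden1 s hs).1
  have hF2 : Fexch q p m (-(r*x)) = ∏ s ∈ Finset.Icc 1 (2*m), gfun q p x (1 - (s:ℤ)) := by
    unfold Fexch
    exact Finset.prod_congr rfl fun s hs => F2term q p r x s hq hp hx hr ha (hden2 s hs).2.1
  have hYe : Yexch q p m x
      = ∏ s ∈ Finset.Icc 1 (2*m-1), (gfun q p x (s:ℤ) / gfun q p x (-(s:ℤ))) := by
    unfold Yexch
    rw [← Finset.prod_pow]
    refine Finset.prod_congr rfl fun s hs => ?_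
    obtain ⟨hs1, hs2⟩ := Finset.mem_Icc.mp hs
    exact Yterm q p x s hq hp hx ha
      (hDg (s:ℤ) (by omega) (by omega))
      ((hDNneg (-(s:ℤ)) (by omega) (by omega)).1)
      ((hDNneg (-(s:ℤ)) (by omega) (by omega)).2)
  have r1 : ∏ s ∈ Finset.Icc 1 (2*m), gfun q p x (2*(m:ℤ) - s)
      = ∏ j ∈ Finset.range (2*m), gfun q p x (j:ℤ) := by
    rw [← Finset.Ico_add_one_right_eq_Icc, Finset.prod_Ico_eq_prod_range, Nat.add_sub_cancel,
      ← Finset.prod_range_reflect (fun j => gfun q p x (j:ℤ)) (2*m)]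
    refine Finset.prod_congr rfl fun j hj => ?_
    have hj' := Finset.mem_range.mp hj
    congr 1
    omega
  have r2 : ∏ s ∈ Finset.Icc 1 (2*m), gfun q p x (1 - (s:ℤ))
      = ∏ j ∈ Finset.range (2*m), gfun q p x (-(j:ℤ)) := by
    rw [← Finset.Ico_add_one_right_eq_Icc, Finset.prod_Ico_eq_prod_range, Nat.add_sub_cancel]
    refine Finset.prod_congr rfl fun j hj => ?_
    congr 1
    omega
  have r3 : ∏ s ∈ Finset.Icc 1 (2*m-1), (gfun q p x (s:ℤ) / gfun q p x (-(s:ℤ)))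
      = (∏ j ∈ Finset.range (2*m-1), gfun q p x ((1+j : ℕ):ℤ))
        / (∏ j ∈ Finset.range (2*m-1), gfun q p x (-((1+j:ℕ):ℤ))) := by
    rw [← Finset.Ico_add_one_right_eq_Icc, Finset.prod_Ico_eq_prod_range, Nat.add_sub_cancel,
      Finset.prod_div_distrib]
  have s1 : ∏ j ∈ Finset.range (2*m), gfun q p x (j:ℤ)
      = (∏ j ∈ Finset.range (2*m-1), gfun q p x ((1+j:ℕ):ℤ)) * gfun q p x 0 := by
    have e := Finset.prod_range_succ' (fun j : ℕ => gfun q p x (j:ℤ)) (2*m-1)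
    rw [show 2*m-1+1 = 2*m from by omega] at e
    rw [e]
    congr 1
    exact Finset.prod_congr rfl fun j _ => by congr 1; omega
  have s2 : ∏ j ∈ Finset.range (2*m), gfun q p x (-(j:ℤ))
      = (∏ j ∈ Finset.range (2*m-1), gfun q p x (-((1+j:ℕ):ℤ))) * gfun q p x 0 := by
    have e := Finset.prod_range_succ' (fun j : ℕ => gfun q p x (-(j:ℤ))) (2*m-1)
    rw [show 2*m-1+1 = 2*m from by omega] at e
    rw [e]
    congr 1
    exact Finset.prod_congr rfl fun j _ => by congr 1; omega
  have hN0 : theta (q^4) (x^2*q^2*p^(0:ℤ)) ≠ 0 := (hDNneg 0 (by omega) le_rfl).2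
  have hD0 : theta (q^4) (x^2*p^(0:ℤ)) ≠ 0 := hDg 0 le_rfl (by omega)
  have hg0 : gfun q p x 0 ≠ 0 := by
    rw [gfun]
    refine div_ne_zero (mul_ne_zero ?_ (pow_ne_zero 2 hN0)) (pow_ne_zero 2 hD0)
    exact neg_ne_zero.mpr (mul_ne_zero (mul_ne_zero (inv_ne_zero hq) (pow_ne_zero 2 hx)) (hpt 0))
  rw [hF1, hF2, hYe, r1, r2, r3, s1, s2, mul_div_mul_right _ _ hg0]
end
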